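/- In a finite-horizon MDP, the optimal behavior policy μ*_t(a|s) ∝ π_t(a|s)√(u_{π,t}(s,a)), where u_{π,T−1}(s,a) = q_{π,T−1}(s,a)² and u_{π,t}(s,a) = ∑_{s'} p(s'|s,a)·Var(G^PDIS(τ^{μ*_{t+1:T−1}}_{t+1:T−1})|S_{t+1}=s') + ν_{π,t}(s,a) + q_{π,t}(s,a)², minimizes Var(G^PDIS(τ^{μ_{t:T−1}}_{t:T−1}) | S_t = s) over all μ_{t:T−1} with each μ_k ∈ Λ_k = {μ_k : μ_k(a|s)=0 ⟹ π_k(a|s)u_{π,k}(s,a)=0}. In particular, Var(G^PDIS(τ^{μ*_{t:T−1}}_{t:T−1})|S_t=s) = (∑_a π_t(a|s)√(u_{π,t}(s,a)))² − v_{π,t}(s)². -/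

import Mathlib

open Finset

def Traj (S A : Type) : ℕ → Type
  | 0 => PUnit
  | n+1 => A × S × Traj S A n

instance trajFintype (S A : Type) [Fintype S] [Fintype A] : (n : ℕ) → Fintype (Traj S A n)
  | 0 => inferInstanceAs (Fintype PUnit)
  | n+1 => letI := trajFintype S A n; inferInstanceAs (Fintype (A × S × Traj S A n))

/-- Probability of a trajectory segment of `n` steps starting at time `t` in state `s`,
under behavior policy `b` and transition kernel `p`. -/
noncomputable def trajP {S A : Type} (b : ℕ → S → A → ℝ) (p : S → A → S → ℝ) :
    (n : ℕ) → ℕ → S → Traj S A n → ℝ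
  | 0, _, _, _ => 1
  | n+1, t, s, (a, s', τ) => b t s a * p s a s' * trajP b p n (t+1) s' τ

/-- Per-decision importance sampling return of a trajectory segment, with target policy `π`,
behavior policy `b`, and (deterministic) reward function `r`. -/
noncomputable def pdis {S A : Type} (π b : ℕ → S → A → ℝ) (r : S → A → ℝ) :
    (n : ℕ) → ℕ → S → Traj S A n → ℝ
  | 0, _, _, _ => 0
  | n+1, t, s, (a, s', τ) => (π t s a / b t s a) * (r s a + pdis π b r n (t+1) s' τ)

/-- On-policy (undiscounted) return of a trajectory segment. -/
noncomputable def retG {S A : Type} (r : S → A → ℝ) : (n : ℕ) → S → Traj S A n → ℝ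
  | 0, _, _ => 0
  | n+1, s, (a, s', τ) => r s a + retG r n s' τ

/-- Expectation of a trajectory functional, conditioned on `S_t = s`. -/
noncomputable def Ex {S A : Type} [Fintype S] [Fintype A] (b : ℕ → S → A → ℝ)
    (p : S → A → S → ℝ) (n t : ℕ) (s : S) (f : Traj S A n → ℝ) : ℝ :=
  ∑ τ : Traj S A n, trajP b p n t s τ * f τ

/-- Variance of a trajectory functional, conditioned on `S_t = s`. -/
noncomputable def VarTraj {S A : Type} [Fintype S] [Fintype A] (b : ℕ → S → A → ℝ)
    (p : S → A → S → ℝ) (n t : ℕ) (s : S) (f : Traj S A n → ℝ) : ℝ :=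
  Ex b p n t s (fun τ => (f τ)^2) - (Ex b p n t s f)^2

/-- `ν_{π,t}(s,a)`: variance of the next-state value. -/
noncomputable def nuF {S A : Type} [Fintype S] (p : S → A → S → ℝ) (v : ℕ → S → ℝ)
    (t : ℕ) (s : S) (a : A) : ℝ :=
  (∑ s', p s a s' * (v (t+1) s')^2) - (∑ s', p s a s' * v (t+1) s')^2

set_option linter.unusedSectionVars false

section Helpers

variable {S A : Type} [Fintype S] [Fintype A]

lemma sum_traj_zero (f : Traj S A 0 → ℝ) :
    ∑ τ : Traj S A 0, f τ = f PUnit.unit :=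
  @Fintype.sum_unique ℝ PUnit (trajFintype S A 0) _ _ f

lemma sum_traj_succ (n : ℕ) (f : Traj S A (n+1) → ℝ) :
    ∑ τ : Traj S A (n+1), f τ = ∑ a : A, ∑ s' : S, ∑ τ : Traj S A n, f (a, s', τ) :=
  (Fintype.sum_prod_type (f := f)).trans
    (Finset.sum_congr rfl fun a _ => Fintype.sum_prod_type (f := fun y => f (a, y)))

lemma trajP_sum (b : ℕ → S → A → ℝ) (p : S → A → S → ℝ)
    (hb1 : ∀ t s, ∑ a, b t s a = 1) (hp1 : ∀ s a, ∑ s', p s a s' = 1) :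
    ∀ n t s, ∑ τ : Traj S A n, trajP b p n t s τ = 1 := by
  intro n
  induction n with
  | zero => intro t s; rw [sum_traj_zero]; simp [trajP]
  | succ n ih =>
    intro t s
    rw [sum_traj_succ]
    have h2 : ∀ (a : A) (s' : S), ∑ τ : Traj S A n, trajP b p (n+1) t s (a, s', τ)
        = b t s a * p s a s' := by
      intro a s'
      calc ∑ τ : Traj S A n, trajP b p (n+1) t s (a, s', τ)
          = ∑ τ : Traj S A n, b t s a * p s a s' * trajP b p n (t+1) s' τ :=
            Finset.sum_congr rfl fun τ _ => by simp [trajP]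
        _ = b t s a * p s a s' * ∑ τ : Traj S A n, trajP b p n (t+1) s' τ :=
            (Finset.mul_sum _ _ _).symm
        _ = b t s a * p s a s' := by rw [ih (t+1) s', mul_one]
    calc ∑ a : A, ∑ s' : S, ∑ τ : Traj S A n, trajP b p (n+1) t s (a, s', τ)
        = ∑ a : A, ∑ s' : S, b t s a * p s a s' :=
          Finset.sum_congr rfl fun a _ => Finset.sum_congr rfl fun s' _ => h2 a s'
      _ = ∑ a : A, b t s a := by
          refine Finset.sum_congr rfl fun a _ => ?_
          rw [← Finset.mul_sum, hp1, mul_one]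
      _ = 1 := hb1 t s

lemma trajP_nonneg (b : ℕ → S → A → ℝ) (p : S → A → S → ℝ)
    (hb0 : ∀ t s a, 0 ≤ b t s a) (hp0 : ∀ s a s', 0 ≤ p s a s') :
    ∀ n t s τ, 0 ≤ trajP b p n t s τ
  | 0, t, s, τ => by simp [trajP]
  | n+1, t, s, (a, s', τ') => by
      have := trajP_nonneg b p hb0 hp0 n (t+1) s' τ'
      simp only [trajP]
      exact mul_nonneg (mul_nonneg (hb0 _ _ _) (hp0 _ _ _)) this

lemma Ex_zero (b : ℕ → S → A → ℝ) (p : S → A → S → ℝ) (t : ℕ) (s : S) (f : Traj S A 0 → ℝ) :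
    Ex b p 0 t s f = f PUnit.unit := by
  unfold Ex; rw [sum_traj_zero]; simp [trajP]

lemma Ex_succ (b : ℕ → S → A → ℝ) (p : S → A → S → ℝ) (n t : ℕ) (s : S)
    (f : Traj S A (n+1) → ℝ) :
    Ex b p (n+1) t s f
      = ∑ a, ∑ s', b t s a * p s a s' * Ex b p n (t+1) s' (fun τ => f (a, s', τ)) := by
  unfold Ex
  rw [sum_traj_succ]
  refine Finset.sum_congr rfl fun a _ => Finset.sum_congr rfl fun s' _ => ?_
  rw [Finset.mul_sum]
  refine Finset.sum_congr rfl fun τ _ => ?_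
  simp only [trajP]
  ring

lemma Ex_affine (b : ℕ → S → A → ℝ) (p : S → A → S → ℝ)
    (hb1 : ∀ t s, ∑ a, b t s a = 1) (hp1 : ∀ s a, ∑ s', p s a s' = 1)
    (n t : ℕ) (s : S) (c d : ℝ) (g : Traj S A n → ℝ) :
    Ex b p n t s (fun τ => c * (d + g τ)) = c * (d + Ex b p n t s g) := by
  unfold Ex
  have h := trajP_sum b p hb1 hp1 n t s
  calc ∑ τ : Traj S A n, trajP b p n t s τ * (c * (d + g τ))
      = c * d * (∑ τ : Traj S A n, trajP b p n t s τ)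
        + c * (∑ τ : Traj S A n, trajP b p n t s τ * g τ) := by
        rw [Finset.mul_sum, Finset.mul_sum, ← Finset.sum_add_distrib]
        exact Finset.sum_congr rfl fun τ _ => by ring
    _ = _ := by rw [h]; ring

lemma Ex_sq_affine (b : ℕ → S → A → ℝ) (p : S → A → S → ℝ)
    (hb1 : ∀ t s, ∑ a, b t s a = 1) (hp1 : ∀ s a, ∑ s', p s a s' = 1)
    (n t : ℕ) (s : S) (c d : ℝ) (g : Traj S A n → ℝ) :
    Ex b p n t s (fun τ => (c * (d + g τ))^2)
      = c^2 * (d^2 + 2*d*(Ex b p n t s g) + Ex b p n t s (fun τ => (g τ)^2)) := by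
  unfold Ex
  have h := trajP_sum b p hb1 hp1 n t s
  calc ∑ τ : Traj S A n, trajP b p n t s τ * (c * (d + g τ))^2
      = c^2*d^2*(∑ τ : Traj S A n, trajP b p n t s τ)
        + 2*c^2*d*(∑ τ : Traj S A n, trajP b p n t s τ * g τ)
        + c^2*(∑ τ : Traj S A n, trajP b p n t s τ * (g τ)^2) := by
        rw [Finset.mul_sum, Finset.mul_sum, Finset.mul_sum, ← Finset.sum_add_distrib,
          ← Finset.sum_add_distrib]
        exact Finset.sum_congr rfl fun τ _ => by ring
    _ = _ := by rw [h]; ring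

lemma VarTraj_nonneg (b : ℕ → S → A → ℝ) (p : S → A → S → ℝ)
    (hb0 : ∀ t s a, 0 ≤ b t s a) (hp0 : ∀ s a s', 0 ≤ p s a s')
    (hb1 : ∀ t s, ∑ a, b t s a = 1) (hp1 : ∀ s a, ∑ s', p s a s' = 1)
    (n t : ℕ) (s : S) (f : Traj S A n → ℝ) : 0 ≤ VarTraj b p n t s f := by
  have hP0 := trajP_nonneg b p hb0 hp0 n t s
  have hP1 := trajP_sum b p hb1 hp1 n t s
  have cs := Finset.sum_mul_sq_le_sq_mul_sq Finset.univ
    (fun τ => Real.sqrt (trajP b p n t s τ)) (fun τ => Real.sqrt (trajP b p n t s τ) * f τ)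
  have e1 : ∑ τ : Traj S A n,
      Real.sqrt (trajP b p n t s τ) * (Real.sqrt (trajP b p n t s τ) * f τ)
      = Ex b p n t s f := by
    unfold Ex
    refine Finset.sum_congr rfl fun τ _ => ?_
    rw [← mul_assoc, Real.mul_self_sqrt (hP0 τ)]
  have e2 : ∑ τ : Traj S A n, (Real.sqrt (trajP b p n t s τ))^2 = 1 := by
    rw [Finset.sum_congr rfl fun τ _ => Real.sq_sqrt (hP0 τ)]
    exact hP1
  have e3 : ∑ τ : Traj S A n, (Real.sqrt (trajP b p n t s τ) * f τ)^2
      = Ex b p n t s (fun τ => (f τ)^2) := by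
    unfold Ex
    refine Finset.sum_congr rfl fun τ _ => ?_
    rw [mul_pow, Real.sq_sqrt (hP0 τ)]
  rw [e1, e2, e3, one_mul] at cs
  unfold VarTraj
  linarith

lemma nuF_nonneg (p : S → A → S → ℝ) (v : ℕ → S → ℝ)
    (hp0 : ∀ s a s', 0 ≤ p s a s') (hp1 : ∀ s a, ∑ s', p s a s' = 1)
    (t : ℕ) (s : S) (a : A) : 0 ≤ nuF p v t s a := by
  have cs := Finset.sum_mul_sq_le_sq_mul_sq Finset.univ
    (fun s' => Real.sqrt (p s a s')) (fun s' => Real.sqrt (p s a s') * v (t+1) s')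
  have e1 : ∑ s' : S, Real.sqrt (p s a s') * (Real.sqrt (p s a s') * v (t+1) s')
      = ∑ s', p s a s' * v (t+1) s' := by
    refine Finset.sum_congr rfl fun s' _ => ?_
    rw [← mul_assoc, Real.mul_self_sqrt (hp0 s a s')]
  have e2 : ∑ s' : S, (Real.sqrt (p s a s'))^2 = 1 := by
    rw [Finset.sum_congr rfl fun s' _ => Real.sq_sqrt (hp0 s a s')]
    exact hp1 s a
  have e3 : ∑ s' : S, (Real.sqrt (p s a s') * v (t+1) s')^2
      = ∑ s', p s a s' * (v (t+1) s')^2 := by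
    refine Finset.sum_congr rfl fun s' _ => ?_
    rw [mul_pow, Real.sq_sqrt (hp0 s a s')]
  rw [e1, e2, e3, one_mul] at cs
  unfold nuF
  linarith


open scoped Classical in
theorem pdis_aux {S A : Type} [Fintype S] [Fintype A]
    (T : ℕ) (p : S → A → S → ℝ) (r : S → A → ℝ)
    (π μstar : ℕ → S → A → ℝ)
    (v : ℕ → S → ℝ) (q u : ℕ → S → A → ℝ)
    (hp0 : ∀ s a s', 0 ≤ p s a s') (hp1 : ∀ s a, ∑ s', p s a s' = 1)
    (hπ0 : ∀ t s a, 0 ≤ π t s a) (hπ1 : ∀ t s, ∑ a, π t s a = 1)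
    (hμstar0 : ∀ t s a, 0 ≤ μstar t s a) (hμstar1 : ∀ t s, ∑ a, μstar t s a = 1)
    (hvT : ∀ s, v T s = 0)
    (hq : ∀ t, t < T → ∀ s a, q t s a = r s a + ∑ s', p s a s' * v (t+1) s')
    (hv : ∀ t, t < T → ∀ s, v t s = ∑ a, π t s a * q t s a)
    (huT : ∀ s a, u (T - 1) s a = (q (T - 1) s a) ^ 2)
    (hu : ∀ t, t + 1 < T → ∀ s a, u t s a
      = (∑ s', p s a s' *
          VarTraj μstar p (T - (t+1)) (t+1) s' (pdis π μstar r (T - (t+1)) (t+1) s'))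
        + nuF p v t s a + (q t s a) ^ 2)
    (hμstar : ∀ t s a, μstar t s a =
      if ∃ a₀, π t s a₀ * Real.sqrt (u t s a₀) ≠ 0
      then π t s a * Real.sqrt (u t s a) / ∑ b, π t s b * Real.sqrt (u t s b)
      else 1 / (Fintype.card A : ℝ)) :
    ∀ n t, t + n = T → ∀ s,
      (∀ μ : ℕ → S → A → ℝ, (∀ k s' a, 0 ≤ μ k s' a) → (∀ k s', ∑ a, μ k s' a = 1) →
        (∀ k, t ≤ k → k < T → ∀ s' a, μ k s' a = 0 → π k s' a * u k s' a = 0) →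
        Ex μ p n t s (pdis π μ r n t s) = v t s ∧
        VarTraj μstar p n t s (pdis π μstar r n t s) ≤ VarTraj μ p n t s (pdis π μ r n t s)) ∧
      (n ≠ 0 → VarTraj μstar p n t s (pdis π μstar r n t s)
        = (∑ a, π t s a * Real.sqrt (u t s a)) ^ 2 - (v t s) ^ 2) := by
  have VarZero : ∀ (b : ℕ → S → A → ℝ) (t : ℕ) (s : S),
      VarTraj b p 0 t s (pdis π b r 0 t s) = 0 := by
    intro b t s
    unfold VarTraj
    rw [Ex_zero, Ex_zero]
    simp [pdis]
  have hU : ∀ t, t + 1 ≤ T → ∀ s a, u t s a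
      = q t s a ^ 2 + nuF p v t s a
        + ∑ s', p s a s' * VarTraj μstar p (T - (t+1)) (t+1) s'
            (pdis π μstar r (T - (t+1)) (t+1) s') := by
    intro t ht s a
    rcases lt_or_eq_of_le ht with h | h
    · rw [hu t h s a]; ring
    · have h1 : T - (t+1) = 0 := by omega
      have h2 : t = T - 1 := by omega
      rw [h1]
      have h4 : nuF p v t s a = 0 := by
        unfold nuF
        rw [show t + 1 = T from h]
        simp [hvT]
      have h6 : ∑ s', p s a s' * VarTraj μstar p 0 (t+1) s'
          (pdis π μstar r 0 (t+1) s') = 0 :=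
        Finset.sum_eq_zero fun s' _ => by rw [VarZero μstar (t+1) s', mul_zero]
      rw [h4, h6, h2, huT]
      ring
  have hu0 : ∀ t, t < T → ∀ s a, 0 ≤ u t s a := by
    intro t ht s a
    rw [hU t (by omega) s a]
    have h1 : 0 ≤ nuF p v t s a := nuF_nonneg p v hp0 hp1 t s a
    have h2 : 0 ≤ ∑ s', p s a s' * VarTraj μstar p (T-(t+1)) (t+1) s'
        (pdis π μstar r (T-(t+1)) (t+1) s') :=
      Finset.sum_nonneg fun s' _ => mul_nonneg (hp0 _ _ _)
        (VarTraj_nonneg μstar p hμstar0 hp0 hμstar1 hp1 _ _ _ _)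
    have h3 := sq_nonneg (q t s a)
    linarith
  have hq0 : ∀ t, t < T → ∀ s a, u t s a = 0 → q t s a = 0 := by
    intro t ht s a h
    have h1 := hU t (by omega) s a
    have h2 : 0 ≤ nuF p v t s a := nuF_nonneg p v hp0 hp1 t s a
    have h3 : 0 ≤ ∑ s', p s a s' * VarTraj μstar p (T-(t+1)) (t+1) s'
        (pdis π μstar r (T-(t+1)) (t+1) s') :=
      Finset.sum_nonneg fun s' _ => mul_nonneg (hp0 _ _ _)
        (VarTraj_nonneg μstar p hμstar0 hp0 hμstar1 hp1 _ _ _ _)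
    have h4 : q t s a ^ 2 = 0 := by nlinarith [sq_nonneg (q t s a)]
    exact pow_eq_zero_iff (two_ne_zero) |>.1 h4
  have hπu : ∀ t, t < T → ∀ s a, π t s a * u t s a = 0 →
      π t s a * q t s a = 0 ∧ π t s a * Real.sqrt (u t s a) = 0 := by
    intro t ht s a h
    rcases mul_eq_zero.1 h with h | h
    · exact ⟨by rw [h, zero_mul], by rw [h, zero_mul]⟩
    · exact ⟨by rw [hq0 t ht s a h, mul_zero], by rw [h, Real.sqrt_zero, mul_zero]⟩
  have hμstarsupp : ∀ k, k < T → ∀ s a, μstar k s a = 0 → π k s a * u k s a = 0 := by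
    intro k hk s a h0
    rw [hμstar k s a] at h0
    by_cases hex : ∃ a₀, π k s a₀ * Real.sqrt (u k s a₀) ≠ 0
    · rw [if_pos hex] at h0
      have hx : π k s a * Real.sqrt (u k s a) = 0 := by
        rcases div_eq_zero_iff.1 h0 with h | h
        · exact h
        · exfalso
          obtain ⟨a₀, ha₀⟩ := hex
          have hZ : 0 < ∑ b, π k s b * Real.sqrt (u k s b) :=
            Finset.sum_pos' (fun a _ => mul_nonneg (hπ0 _ _ _) (Real.sqrt_nonneg _))
              ⟨a₀, Finset.mem_univ _,
                lt_of_le_of_ne (mul_nonneg (hπ0 _ _ _) (Real.sqrt_nonneg _)) (Ne.symm ha₀)⟩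
          exact hZ.ne' h
      rcases mul_eq_zero.1 hx with h | h
      · rw [h, zero_mul]
      · have : u k s a = 0 := le_antisymm (Real.sqrt_eq_zero'.1 h ) (hu0 k hk s a)
        rw [this, mul_zero]
    · rw [if_neg hex] at h0
      exfalso
      have hA : Nonempty A := by
        by_contra hA
        rw [not_nonempty_iff] at hA
        have := hπ1 k s
        rw [Finset.univ_eq_empty, Finset.sum_empty] at this
        exact one_ne_zero this.symm
      have : (Fintype.card A : ℝ) ≠ 0 := Nat.cast_ne_zero.2 Fintype.card_ne_zero
      exact (one_div_ne_zero this) h0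
  intro n
  induction n with
  | zero =>
    intro t ht s
    have htT : t = T := by omega
    refine ⟨fun μ h0 h1 hs => ⟨?_, ?_⟩, fun h => absurd rfl h⟩
    · rw [Ex_zero]
      simp [pdis, htT, hvT]
    · rw [VarZero μstar, VarZero μ]
  | succ n ih =>
    intro t ht s
    have htT : t < T := by omega
    have ht1 : (t+1) + n = T := by omega
    have hTn : T - (t+1) = n := by omega
    have huEq : ∀ a, u t s a = q t s a ^2 + nuF p v t s a
        + ∑ s', p s a s' * VarTraj μstar p n (t+1) s' (pdis π μstar r n (t+1) s') := by
      intro a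
      have h := hU t (by omega) s a
      rwa [hTn] at h
    have key : ∀ (b : ℕ → S → A → ℝ), (∀ k s a, 0 ≤ b k s a) → (∀ k s, ∑ a, b k s a = 1) →
        (∀ a, b t s a = 0 → π t s a * u t s a = 0) →
        (∀ s', Ex b p n (t+1) s' (pdis π b r n (t+1) s') = v (t+1) s') →
        Ex b p (n+1) t s (pdis π b r (n+1) t s) = v t s ∧
        Ex b p (n+1) t s (fun τ => (pdis π b r (n+1) t s τ)^2)
          = ∑ a, b t s a * (π t s a / b t s a)^2 *
              (q t s a ^2 + nuF p v t s a
                + ∑ s', p s a s' * VarTraj b p n (t+1) s' (pdis π b r n (t+1) s')) := by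
      intro b hb0 hb1 hbs hbM
      have hinner : ∀ a, ∑ s', p s a s' * (r s a + v (t+1) s') = q t s a := by
        intro a
        rw [hq t htT s a]
        rw [Finset.sum_congr rfl (fun s' _ => mul_add (p s a s') (r s a) (v (t+1) s')),
          Finset.sum_add_distrib, ← Finset.sum_mul, hp1 s a, one_mul]
      constructor
      · rw [Ex_succ]
        have e1 : ∀ (a : A) (s' : S),
            Ex b p n (t+1) s' (fun τ => pdis π b r (n+1) t s (a, s', τ))
            = (π t s a / b t s a) * (r s a + v (t+1) s') := by
          intro a s'
          have e : (fun τ : Traj S A n => pdis π b r (n+1) t s (a, s', τ))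
              = fun τ => (π t s a / b t s a) * (r s a + pdis π b r n (t+1) s' τ) :=
            funext fun τ => by simp [pdis]
          rw [e, Ex_affine b p hb1 hp1]
          simp only [hbM]
        simp only [e1]
        have e2 : ∀ a : A,
            ∑ s', b t s a * p s a s' * ((π t s a / b t s a) * (r s a + v (t+1) s'))
            = π t s a * q t s a := by
          intro a
          by_cases hb : b t s a = 0
          · have hπq : π t s a * q t s a = 0 := (hπu t htT s a (hbs a hb)).1
            rw [hπq]
            exact Finset.sum_eq_zero fun s' _ => by rw [hb, zero_mul, zero_mul]
          · calc ∑ s', b t s a * p s a s' * ((π t s a / b t s a) * (r s a + v (t+1) s'))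
                = b t s a * (π t s a / b t s a) * ∑ s', p s a s' * (r s a + v (t+1) s') := by
                  rw [Finset.mul_sum]
                  exact Finset.sum_congr rfl fun s' _ => by ring
              _ = b t s a * (π t s a / b t s a) * q t s a := by rw [hinner a]
              _ = π t s a * q t s a := by field_simp
        simp only [e2]
        exact (hv t htT s).symm
      · rw [Ex_succ]
        have W' : ∀ s' : S, Ex b p n (t+1) s' (fun τ => (pdis π b r n (t+1) s' τ)^2)
            = VarTraj b p n (t+1) s' (pdis π b r n (t+1) s') + (v (t+1) s')^2 := by
          intro s'
          unfold VarTraj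
          rw [hbM s']
          ring
        have e1 : ∀ (a : A) (s' : S),
            Ex b p n (t+1) s' (fun τ => (pdis π b r (n+1) t s (a, s', τ))^2)
            = (π t s a / b t s a)^2 * ((r s a)^2 + 2*(r s a)*(v (t+1) s')
                + Ex b p n (t+1) s' (fun τ => (pdis π b r n (t+1) s' τ)^2)) := by
          intro a s'
          have e : (fun τ : Traj S A n => (pdis π b r (n+1) t s (a, s', τ))^2)
              = fun τ => ((π t s a / b t s a) * (r s a + pdis π b r n (t+1) s' τ))^2 :=
            funext fun τ => by simp [pdis]
          rw [e, Ex_sq_affine b p hb1 hp1]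
          simp only [hbM]
        simp only [e1]
        have e3 : ∀ a : A,
            ∑ s', b t s a * p s a s' * ((π t s a / b t s a)^2 * ((r s a)^2
              + 2*(r s a)*(v (t+1) s')
              + Ex b p n (t+1) s' (fun τ => (pdis π b r n (t+1) s' τ)^2)))
            = b t s a * (π t s a / b t s a)^2 *
              (q t s a ^2 + nuF p v t s a
                + ∑ s', p s a s' * VarTraj b p n (t+1) s' (pdis π b r n (t+1) s')) := by
          intro a
          have step1 : ∑ s', b t s a * p s a s' * ((π t s a / b t s a)^2 * ((r s a)^2
              + 2*(r s a)*(v (t+1) s')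
              + Ex b p n (t+1) s' (fun τ => (pdis π b r n (t+1) s' τ)^2)))
              = b t s a * (π t s a / b t s a)^2 * ∑ s', p s a s' * ((r s a)^2
                + 2*(r s a)*(v (t+1) s')
                + (VarTraj b p n (t+1) s' (pdis π b r n (t+1) s') + (v (t+1) s')^2)) := by
            rw [Finset.mul_sum]
            exact Finset.sum_congr rfl fun s' _ => by rw [W' s']; ring
          rw [step1]
          congr 1
          have expand : ∀ s' : S, p s a s' * ((r s a)^2 + 2*(r s a)*(v (t+1) s')
              + (VarTraj b p n (t+1) s' (pdis π b r n (t+1) s') + (v (t+1) s')^2))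
              = p s a s' * (r s a)^2 + 2*(r s a) * (p s a s' * v (t+1) s')
                + p s a s' * (v (t+1) s')^2
                + p s a s' * VarTraj b p n (t+1) s' (pdis π b r n (t+1) s') :=
            fun s' => by ring
          rw [Finset.sum_congr rfl fun s' _ => expand s', Finset.sum_add_distrib,
            Finset.sum_add_distrib, Finset.sum_add_distrib, ← Finset.sum_mul,
            ← Finset.mul_sum, hp1 s a, hq t htT s a]
          simp only [nuF]
          ring
        simp only [e3]
    have hμstarM : ∀ s', Ex μstar p n (t+1) s' (pdis π μstar r n (t+1) s') = v (t+1) s' :=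
      fun s' => ((ih (t+1) ht1 s').1 μstar hμstar0 hμstar1
        (fun k _ hk s'' a h => hμstarsupp k hk s'' a h)).1
    have keystar := key μstar hμstar0 hμstar1 (fun a h => hμstarsupp t htT s a h) hμstarM
    have hstar2 : Ex μstar p (n+1) t s (fun τ => (pdis π μstar r (n+1) t s τ)^2)
        = (∑ a, π t s a * Real.sqrt (u t s a))^2 := by
      rw [keystar.2]
      have hterm : ∀ a : A, μstar t s a * (π t s a / μstar t s a)^2 *
          (q t s a ^2 + nuF p v t s a
            + ∑ s', p s a s' * VarTraj μstar p n (t+1) s' (pdis π μstar r n (t+1) s'))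
          = μstar t s a * (π t s a / μstar t s a)^2 * u t s a :=
        fun a => by rw [← huEq a]
      simp only [hterm]
      by_cases hex : ∃ a₀, π t s a₀ * Real.sqrt (u t s a₀) ≠ 0
      · have hZpos : 0 < ∑ b, π t s b * Real.sqrt (u t s b) := by
          obtain ⟨a₀, ha₀⟩ := hex
          exact Finset.sum_pos' (fun a _ => mul_nonneg (hπ0 _ _ _) (Real.sqrt_nonneg _))
            ⟨a₀, Finset.mem_univ _,
              lt_of_le_of_ne (mul_nonneg (hπ0 _ _ _) (Real.sqrt_nonneg _)) (Ne.symm ha₀)⟩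
        have hpt : ∀ a : A, μstar t s a * (π t s a / μstar t s a)^2 * u t s a
            = (π t s a * Real.sqrt (u t s a)) * ∑ b, π t s b * Real.sqrt (u t s b) := by
          intro a
          rw [hμstar t s a, if_pos hex]
          by_cases hx : π t s a * Real.sqrt (u t s a) = 0
          · rw [hx]
            simp
          · have hπa : π t s a ≠ 0 := left_ne_zero_of_mul hx
            have hsu : Real.sqrt (u t s a) ≠ 0 := right_ne_zero_of_mul hx
            have hZne : (∑ b, π t s b * Real.sqrt (u t s b)) ≠ 0 := ne_of_gt hZpos
            have hu2 : Real.sqrt (u t s a)^2 = u t s a := Real.sq_sqrt (hu0 t htT s a)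
            rw [← hu2]
            field_simp
            ring_nf
            simp [hu2]
        rw [Finset.sum_congr rfl fun a _ => hpt a, ← Finset.sum_mul]
        ring
      · have hex2 : ∀ a : A, π t s a * Real.sqrt (u t s a) = 0 := by
          intro a
          by_contra h
          exact hex ⟨a, h⟩
        have hA : Nonempty A := by
          by_contra hA
          rw [not_nonempty_iff] at hA
          have := hπ1 t s
          rw [Finset.univ_eq_empty, Finset.sum_empty] at this
          exact one_ne_zero this.symm
        have hcard : (Fintype.card A : ℝ) ≠ 0 := Nat.cast_ne_zero.2 Fintype.card_ne_zero
        have hZ0 : ∑ a, π t s a * Real.sqrt (u t s a) = 0 :=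
          Finset.sum_eq_zero fun a _ => hex2 a
        rw [hZ0]
        have hpt : ∀ a : A, μstar t s a * (π t s a / μstar t s a)^2 * u t s a = 0 := by
          intro a
          have hμne : μstar t s a ≠ 0 := by
            rw [hμstar t s a, if_neg hex]
            exact one_div_ne_zero hcard
          have hx2 : π t s a ^2 * u t s a = 0 := by
            have h5 : (π t s a * Real.sqrt (u t s a))^2 = 0 := by rw [hex2 a]; ring
            rw [mul_pow, Real.sq_sqrt (hu0 t htT s a)] at h5
            exact h5
          have h6 : μstar t s a * (π t s a / μstar t s a)^2 * u t s a
              = π t s a ^2 * u t s a / μstar t s a := by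
            field_simp
          rw [h6, hx2, zero_div]
        rw [Finset.sum_eq_zero fun a _ => hpt a]
        norm_num
    have hstarVar : VarTraj μstar p (n+1) t s (pdis π μstar r (n+1) t s)
        = (∑ a, π t s a * Real.sqrt (u t s a))^2 - (v t s)^2 := by
      unfold VarTraj
      rw [keystar.1, hstar2]
    refine ⟨fun μ h0 h1 hs => ?_, fun _ => hstarVar⟩
    have hM' : ∀ s', Ex μ p n (t+1) s' (pdis π μ r n (t+1) s') = v (t+1) s' :=
      fun s' => ((ih (t+1) ht1 s').1 μ h0 h1 (fun k hk1 hk2 => hs k (by omega) hk2)).1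
    have hVle : ∀ s', VarTraj μstar p n (t+1) s' (pdis π μstar r n (t+1) s')
        ≤ VarTraj μ p n (t+1) s' (pdis π μ r n (t+1) s') :=
      fun s' => ((ih (t+1) ht1 s').1 μ h0 h1 (fun k hk1 hk2 => hs k (by omega) hk2)).2
    have keyμ := key μ h0 h1 (fun a h => hs t le_rfl htT s a h) hM'
    refine ⟨keyμ.1, ?_⟩
    have hb2 : VarTraj μ p (n+1) t s (pdis π μ r (n+1) t s)
        = Ex μ p (n+1) t s (fun τ => (pdis π μ r (n+1) t s τ)^2) - (v t s)^2 := by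
      unfold VarTraj
      rw [keyμ.1]
    have hstep1 : ∑ a, μ t s a * (π t s a / μ t s a)^2 * u t s a
        ≤ Ex μ p (n+1) t s (fun τ => (pdis π μ r (n+1) t s τ)^2) := by
      rw [keyμ.2]
      refine Finset.sum_le_sum fun a _ => ?_
      have hc : 0 ≤ μ t s a * (π t s a / μ t s a)^2 := mul_nonneg (h0 t s a) (sq_nonneg _)
      refine mul_le_mul_of_nonneg_left ?_ hc
      rw [huEq a]
      have h7 : ∑ s', p s a s' * VarTraj μstar p n (t+1) s' (pdis π μstar r n (t+1) s')
          ≤ ∑ s', p s a s' * VarTraj μ p n (t+1) s' (pdis π μ r n (t+1) s') :=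
        Finset.sum_le_sum fun s' _ => mul_le_mul_of_nonneg_left (hVle s') (hp0 s a s')
      linarith
    have hCS : (∑ a, π t s a * Real.sqrt (u t s a))^2
        ≤ ∑ a, μ t s a * (π t s a / μ t s a)^2 * u t s a := by
      have cs := Finset.sum_mul_sq_le_sq_mul_sq Finset.univ
        (fun a => Real.sqrt (μ t s a))
        (fun a => π t s a * Real.sqrt (u t s a) / Real.sqrt (μ t s a))
      have e1 : ∀ a : A, Real.sqrt (μ t s a)
          * (π t s a * Real.sqrt (u t s a) / Real.sqrt (μ t s a))
          = π t s a * Real.sqrt (u t s a) := by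
        intro a
        by_cases hμ0 : μ t s a = 0
        · have hx := (hπu t htT s a (hs t le_rfl htT s a hμ0)).2
          rw [hx, hμ0]
          simp
        · have hμs : Real.sqrt (μ t s a) ≠ 0 :=
            Real.sqrt_ne_zero'.2 (lt_of_le_of_ne (h0 t s a) (Ne.symm hμ0))
          field_simp
      have e2 : ∑ a, Real.sqrt (μ t s a)^2 = 1 := by
        rw [Finset.sum_congr rfl fun a _ => Real.sq_sqrt (h0 t s a)]
        exact h1 t s
      have e3 : ∀ a : A, (π t s a * Real.sqrt (u t s a) / Real.sqrt (μ t s a))^2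
          = μ t s a * (π t s a / μ t s a)^2 * u t s a := by
        intro a
        by_cases hμ0 : μ t s a = 0
        · rw [hμ0, Real.sqrt_zero, div_zero]
          norm_num
        · have hμpos : 0 < μ t s a := lt_of_le_of_ne (h0 t s a) (Ne.symm hμ0)
          have hμs : Real.sqrt (μ t s a) ≠ 0 := Real.sqrt_ne_zero'.2 hμpos
          rw [div_pow, mul_pow, Real.sq_sqrt (hu0 t htT s a), Real.sq_sqrt (h0 t s a)]
          field_simp
      rw [Finset.sum_congr rfl fun a _ => e1 a, e2, one_mul,
        Finset.sum_congr rfl fun a _ => e3 a] at cs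
      exact cs
    rw [hstarVar, hb2]
    linarith

open scoped Classical in
/-- Optimality of the behavior policy `μ*_t(a|s) ∝ π_t(a|s)√(u_{π,t}(s,a))`:
it minimizes the conditional PDIS variance over all behavior policies in
`Λ_t × ⋯ × Λ_{T-1}`, and its variance has the stated closed form. -/
theorem mu_star_optimal_behavior {S A : Type} [Fintype S] [Fintype A]
    (T : ℕ) (hT : 1 ≤ T) (p : S → A → S → ℝ) (r : S → A → ℝ)
    (π μstar : ℕ → S → A → ℝ)
    (v : ℕ → S → ℝ) (q u : ℕ → S → A → ℝ)
    (hp0 : ∀ s a s', 0 ≤ p s a s') (hp1 : ∀ s a, ∑ s', p s a s' = 1)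
    (hπ0 : ∀ t s a, 0 ≤ π t s a) (hπ1 : ∀ t s, ∑ a, π t s a = 1)
    (hμstar0 : ∀ t s a, 0 ≤ μstar t s a) (hμstar1 : ∀ t s, ∑ a, μstar t s a = 1)
    (hvT : ∀ s, v T s = 0)
    (hq : ∀ t, t < T → ∀ s a, q t s a = r s a + ∑ s', p s a s' * v (t+1) s')
    (hv : ∀ t, t < T → ∀ s, v t s = ∑ a, π t s a * q t s a)
    (huT : ∀ s a, u (T - 1) s a = (q (T - 1) s a) ^ 2)
    (hu : ∀ t, t + 1 < T → ∀ s a, u t s a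
      = (∑ s', p s a s' *
          VarTraj μstar p (T - (t+1)) (t+1) s' (pdis π μstar r (T - (t+1)) (t+1) s'))
        + nuF p v t s a + (q t s a) ^ 2)
    (hμstar : ∀ t s a, μstar t s a =
      if ∃ a₀, π t s a₀ * Real.sqrt (u t s a₀) ≠ 0
      then π t s a * Real.sqrt (u t s a) / ∑ b, π t s b * Real.sqrt (u t s b)
      else 1 / (Fintype.card A : ℝ)) :
    ∀ t, t < T → ∀ s,
      (∀ μ : ℕ → S → A → ℝ, (∀ k s' a, 0 ≤ μ k s' a) → (∀ k s', ∑ a, μ k s' a = 1) →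
        (∀ k, t ≤ k → k < T → ∀ s' a, μ k s' a = 0 → π k s' a * u k s' a = 0) →
        VarTraj μstar p (T - t) t s (pdis π μstar r (T - t) t s)
          ≤ VarTraj μ p (T - t) t s (pdis π μ r (T - t) t s)) ∧
      VarTraj μstar p (T - t) t s (pdis π μstar r (T - t) t s)
        = (∑ a, π t s a * Real.sqrt (u t s a)) ^ 2 - (v t s) ^ 2 := by
  intro t ht s
  have h := pdis_aux T p r π μstar v q u hp0 hp1 hπ0 hπ1 hμstar0 hμstar1 hvT hq hv huT hu
    hμstar (T - t) t (by omega) s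
  exact ⟨fun μ h0 h1 hs => (h.1 μ h0 h1 hs).2, h.2 (by omega)⟩
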